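/- arXiv:1203.0137 — 8 statements merged into one kernel-verified Lean document; each statement's English description precedes it below -/
import Mathlib

section
/- Let F be a trilinear form on an almost contact B-metric vector space (V,φ,ξ,η,g) satisfying F(x,y,z)=F(x,z,y) and F(x,y,z)=F(x,φy,φz)+η(y)F(x,ξ,z)+η(z)F(x,y,ξ). Define N(x,y,z) = F(φx,y,z) - F(x,y,φz) + F(x,φy,ξ)η(z) - F(φy,x,z) + F(y,x,φz) - F(y,φx,ξ)η(z). Then N(φx, φy, φz) = -N(φ²x, φ²y, φz) for all x,y,z ∈ V. -/
theorem stmt6 (V : Type*) [AddCommGroup V] [Module ℝ V]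
    (φ : V →ₗ[ℝ] V) (ξ : V) (η : V →ₗ[ℝ] ℝ)
    (hφξ : φ ξ = 0) (hφ2 : ∀ x : V, φ (φ x) = -x + η x • ξ)
    (hηφ : ∀ x : V, η (φ x) = 0) (hηξ : η ξ = 1)
    (g : V →ₗ[ℝ] V →ₗ[ℝ] ℝ) (hsym : ∀ x y : V, g x y = g y x)
    (hB : ∀ x y : V, g (φ x) (φ y) = - g x y + η x * η y)
    (F : V →ₗ[ℝ] V →ₗ[ℝ] V →ₗ[ℝ] ℝ)
    (hF1 : ∀ x y z : V, F x y z = F x z y)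
    (hF2 : ∀ x y z : V, F x y z = F x (φ y) (φ z) + η y * F x ξ z + η z * F x y ξ)
    (N : V → V → V → ℝ)
    (hN : ∀ x y z : V, N x y z = F (φ x) y z - F x y (φ z) + F x (φ y) ξ * η z
          - F (φ y) x z + F y x (φ z) - F y (φ x) ξ * η z) :
    ∀ x y z : V, N (φ x) (φ y) (φ z) = - N (φ (φ x)) (φ (φ y)) (φ z) := by
  intro x y z
  have h1 : ∀ a b c : V, F a (φ b) (φ c) = F a b c - η b * F a ξ c - η c * F a b ξ := by
    intro a b c; have := hF2 a b c; linarith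
  have h2 : ∀ a b c : V, F a b (φ c) = -F a (φ b) c + η b * F a (φ c) ξ + η c * F a (φ b) ξ := by
    intro a b c
    have h := hF2 a (φ b) c
    simp only [hφ2, hηφ, map_add, map_neg, map_smul, LinearMap.add_apply, LinearMap.neg_apply,
      LinearMap.smul_apply, smul_eq_mul, mul_zero, zero_mul, LinearMap.map_add, LinearMap.map_neg,
      LinearMap.map_smul] at h
    rw [hF1 a ξ (φ c)] at h
    linarith
  have h3 : ∀ a : V, F a ξ ξ = 0 := by
    intro a
    have := hF2 a ξ ξ
    simp only [hφξ, hηξ, one_mul, map_zero, LinearMap.map_zero, LinearMap.zero_apply] at this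
    linarith
  simp only [hN, hφ2, hηφ, mul_zero, map_add, map_neg, map_smul, LinearMap.add_apply,
    LinearMap.neg_apply, LinearMap.smul_apply, smul_eq_mul, hφξ, hηξ, map_zero,
    LinearMap.map_add, LinearMap.map_neg, LinearMap.map_smul, LinearMap.zero_apply,
    LinearMap.map_zero]
  simp only [h1]
  simp only [h2]
  simp only [h1, h3, hφξ, hηφ, hηξ, map_zero, LinearMap.map_zero, LinearMap.zero_apply,
    mul_zero, zero_mul, one_mul, mul_one]
  ring_nf
end

section
/- With N defined from F as N(x,y,z) = F(φx,y,z) - F(x,y,φz) + F(x,φy,ξ)η(z) - F(φy,x,z) + F(y,x,φz) - F(y,φx,ξ)η(z) on an almost contact B-metric vector space, one has N(φ²x, φy, φz) = N(φx, φ²y, φz) = -N(φx, φy, φ²z) for all x, y, z. -/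
/-!
On the image of `φ` the structure satisfies `φ³ = -φ`, and the compatibility condition on `F`
reduces to `F a (φ u) (φ v) = F a (φ² u) (φ² v)`. Hence moving a `φ` between the last two
arguments of `F` costs a sign: `F a (φ² u) (φ v) = -F a (φ u) (φ² v)`. Since the `η`-terms of `N`
vanish when its last argument lies in the image of `φ`, these two rules turn both identities into
a term-by-term comparison.
-/

namespace AlmostContact

variable {R V : Type*} [CommRing R] [AddCommGroup V] [Module R V]
  {φ : V →ₗ[R] V} {ξ : V} {η : V →ₗ[R] R} {F : V →ₗ[R] V →ₗ[R] V →ₗ[R] R}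

theorem phi_cube (hφ2 : ∀ x, φ (φ x) = -x + η x • ξ) (hηφ : ∀ x, η (φ x) = 0) (x : V) :
    φ (φ (φ x)) = -φ x := by
  rw [hφ2, hηφ, zero_smul, add_zero]

theorem form_phi_sq_phi_sq
    (hF : ∀ x y z, F x y z = F x (φ y) (φ z) + η y * F x ξ z + η z * F x y ξ)
    (hηφ : ∀ x, η (φ x) = 0) (a u v : V) : F a (φ (φ u)) (φ (φ v)) = F a (φ u) (φ v) := by
  rw [hF a (φ u) (φ v), hηφ, hηφ, zero_mul, zero_mul, add_zero, add_zero]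

theorem form_phi_sq_phi
    (hF : ∀ x y z, F x y z = F x (φ y) (φ z) + η y * F x ξ z + η z * F x y ξ)
    (hηφ : ∀ x, η (φ x) = 0) (hφ2 : ∀ x, φ (φ x) = -x + η x • ξ) (a u v : V) :
    F a (φ (φ u)) (φ v) = -F a (φ u) (φ (φ v)) := by
  rw [← form_phi_sq_phi_sq hF hηφ a (φ u) v, phi_cube hφ2 hηφ, map_neg, LinearMap.neg_apply]

theorem nijenhuis_apply_phi {N : V → V → V → R}
    (hηφ : ∀ x, η (φ x) = 0)
    (hN : ∀ x y z, N x y z = F (φ x) y z - F x y (φ z) + F x (φ y) ξ * η z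
          - F (φ y) x z + F y x (φ z) - F y (φ x) ξ * η z) (x y w : V) :
    N x y (φ w) = F (φ x) y (φ w) - F x y (φ (φ w)) - F (φ y) x (φ w) + F y x (φ (φ w)) := by
  rw [hN, hηφ]
  ring

end AlmostContact

open AlmostContact in
theorem stmt7_general (V : Type*) [AddCommGroup V] [Module ℝ V]
    (φ : V →ₗ[ℝ] V) (ξ : V) (η : V →ₗ[ℝ] ℝ)
    (hφ2 : ∀ x : V, φ (φ x) = -x + η x • ξ)
    (hηφ : ∀ x : V, η (φ x) = 0)
    (F : V →ₗ[ℝ] V →ₗ[ℝ] V →ₗ[ℝ] ℝ)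
    (hF2 : ∀ x y z : V, F x y z = F x (φ y) (φ z) + η y * F x ξ z + η z * F x y ξ)
    (N : V → V → V → ℝ)
    (hN : ∀ x y z : V, N x y z = F (φ x) y z - F x y (φ z) + F x (φ y) ξ * η z
          - F (φ y) x z + F y x (φ z) - F y (φ x) ξ * η z) :
    ∀ x y z : V, N (φ (φ x)) (φ y) (φ z) = N (φ x) (φ (φ y)) (φ z) ∧
      N (φ x) (φ (φ y)) (φ z) = - N (φ x) (φ y) (φ (φ z)) := by
  intro x y z
  simp only [nijenhuis_apply_phi hηφ hN, phi_cube hφ2 hηφ, map_neg, LinearMap.neg_apply,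
    form_phi_sq_phi_sq hF2 hηφ, form_phi_sq_phi hF2 hηφ hφ2]
  constructor <;> ring

theorem stmt7 (V : Type*) [AddCommGroup V] [Module ℝ V]
    (φ : V →ₗ[ℝ] V) (ξ : V) (η : V →ₗ[ℝ] ℝ)
    (hφξ : φ ξ = 0) (hφ2 : ∀ x : V, φ (φ x) = -x + η x • ξ)
    (hηφ : ∀ x : V, η (φ x) = 0) (hηξ : η ξ = 1)
    (g : V →ₗ[ℝ] V →ₗ[ℝ] ℝ) (hsym : ∀ x y : V, g x y = g y x)
    (hB : ∀ x y : V, g (φ x) (φ y) = - g x y + η x * η y)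
    (F : V →ₗ[ℝ] V →ₗ[ℝ] V →ₗ[ℝ] ℝ)
    (hF1 : ∀ x y z : V, F x y z = F x z y)
    (hF2 : ∀ x y z : V, F x y z = F x (φ y) (φ z) + η y * F x ξ z + η z * F x y ξ)
    (N : V → V → V → ℝ)
    (hN : ∀ x y z : V, N x y z = F (φ x) y z - F x y (φ z) + F x (φ y) ξ * η z
          - F (φ y) x z + F y x (φ z) - F y (φ x) ξ * η z) :
    ∀ x y z : V, N (φ (φ x)) (φ y) (φ z) = N (φ x) (φ (φ y)) (φ z) ∧
      N (φ x) (φ (φ y)) (φ z) = - N (φ x) (φ y) (φ (φ z)) :=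
  stmt7_general V φ ξ η hφ2 hηφ F hF2 N hN
end

section
/- Suppose F satisfies the class F₄ condition F(x,y,z) = -(θ(ξ)/(2n))·{g(φx,φy)η(z) + g(φx,φz)η(y)} for a constant θ(ξ) ∈ ℝ on an almost contact B-metric vector space. Then the Nijenhuis-type tensor N built from F by N(x,y,z) = F(φx,y,z) - F(x,y,φz) + F(x,φy,ξ)η(z) - F(φy,x,z) + F(y,x,φz) - F(y,φx,ξ)η(z) vanishes identically. -/
/-! Writing `N x y z = A x y z - A y x z` with `A x y z = F (φ x) y z - F x y (φ z) + F x (φ y) ξ * η z`,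
the B-metric identities turn `A` for an `F₄`-tensor into a multiple of `g (φ x) y * η z`. Since `φ` is
self-adjoint for `g`, this is symmetric in `x` and `y`, so the two halves of `N` cancel. -/

namespace AlmostContactBMetric

variable {V : Type*} [AddCommGroup V] [Module ℝ V] {φ : V →ₗ[ℝ] V} {ξ : V} {η : V →ₗ[ℝ] ℝ}
  {g : V →ₗ[ℝ] V →ₗ[ℝ] ℝ}

theorem apply_phi_xi_eq_zero (hφξ : φ ξ = 0) (hηφ : ∀ x, η (φ x) = 0)
    (hB : ∀ x y, g (φ x) (φ y) = -g x y + η x * η y) (x : V) : g (φ x) ξ = 0 := by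
  have := hB (φ x) ξ
  rw [hφξ, hηφ, map_zero, zero_mul] at this
  linarith

theorem apply_phi_left_eq_apply_phi_right (hφξ : φ ξ = 0) (hφ2 : ∀ x, φ (φ x) = -x + η x • ξ)
    (hηφ : ∀ x, η (φ x) = 0) (hB : ∀ x y, g (φ x) (φ y) = -g x y + η x * η y) (x y : V) :
    g (φ x) y = g x (φ y) := by
  have := hB x (φ y)
  rw [hφ2, map_add, map_neg, map_smul, apply_phi_xi_eq_zero hφξ hηφ hB, hηφ] at this
  simp only [smul_zero, add_zero, mul_zero] at this
  exact neg_inj.mp this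

theorem f4_nijenhuis_half_eq (hφξ : φ ξ = 0) (hφ2 : ∀ x, φ (φ x) = -x + η x • ξ)
    (hηφ : ∀ x, η (φ x) = 0) (hB : ∀ x y, g (φ x) (φ y) = -g x y + η x * η y)
    {F : V → V → V → ℝ} {c : ℝ}
    (hF : ∀ x y z, F x y z = c * (g (φ x) (φ y) * η z + g (φ x) (φ z) * η y)) (x y z : V) :
    F (φ x) y z - F x y (φ z) + F x (φ y) ξ * η z = -c * (1 + η ξ) * g (φ x) y * η z := by
  have hsa := apply_phi_left_eq_apply_phi_right hφξ hφ2 hηφ hB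
  simp only [hF, hB (φ x), hB x (φ _), hηφ, hsa x]
  ring

end AlmostContactBMetric

open AlmostContactBMetric in
theorem stmt9_general (V : Type*) [AddCommGroup V] [Module ℝ V]
    (φ : V →ₗ[ℝ] V) (ξ : V) (η : V →ₗ[ℝ] ℝ)
    (hφξ : φ ξ = 0) (hφ2 : ∀ x : V, φ (φ x) = -x + η x • ξ)
    (hηφ : ∀ x : V, η (φ x) = 0)
    (g : V →ₗ[ℝ] V →ₗ[ℝ] ℝ) (hsym : ∀ x y : V, g x y = g y x)
    (hB : ∀ x y : V, g (φ x) (φ y) = - g x y + η x * η y)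
    (n : ℕ) (θξ : ℝ)
    (F : V → V → V → ℝ)
    (hF : ∀ x y z : V, F x y z =
      -(θξ / (2 * n)) * (g (φ x) (φ y) * η z + g (φ x) (φ z) * η y))
    (N : V → V → V → ℝ)
    (hN : ∀ x y z : V, N x y z = F (φ x) y z - F x y (φ z) + F x (φ y) ξ * η z
          - F (φ y) x z + F y x (φ z) - F y (φ x) ξ * η z) :
    ∀ x y z : V, N x y z = 0 := by
  intro x y z
  have hsymm : g (φ x) y = g (φ y) x := by
    rw [apply_phi_left_eq_apply_phi_right hφξ hφ2 hηφ hB, hsym]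
  have hA := f4_nijenhuis_half_eq hφξ hφ2 hηφ hB hF
  rw [hN]
  linear_combination hA x y z - hA y x z + (θξ / (2 * n)) * (1 + η ξ) * η z * hsymm

theorem stmt9 (V : Type*) [AddCommGroup V] [Module ℝ V]
    (φ : V →ₗ[ℝ] V) (ξ : V) (η : V →ₗ[ℝ] ℝ)
    (hφξ : φ ξ = 0) (hφ2 : ∀ x : V, φ (φ x) = -x + η x • ξ)
    (hηφ : ∀ x : V, η (φ x) = 0) (hηξ : η ξ = 1)
    (g : V →ₗ[ℝ] V →ₗ[ℝ] ℝ) (hsym : ∀ x y : V, g x y = g y x)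
    (hB : ∀ x y : V, g (φ x) (φ y) = - g x y + η x * η y)
    (n : ℕ) (θξ : ℝ)
    (F : V → V → V → ℝ)
    (hF : ∀ x y z : V, F x y z =
      -(θξ / (2 * n)) * (g (φ x) (φ y) * η z + g (φ x) (φ z) * η y))
    (N : V → V → V → ℝ)
    (hN : ∀ x y z : V, N x y z = F (φ x) y z - F x y (φ z) + F x (φ y) ξ * η z
          - F (φ y) x z + F y x (φ z) - F y (φ x) ξ * η z) :
    ∀ x y z : V, N x y z = 0 :=
  stmt9_general V φ ξ η hφξ hφ2 hηφ g hsym hB n θξ F hF N hN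
end

section
/- Suppose F satisfies the class F₅ condition F(x,y,z) = -(θ*(ξ)/(2n))·{g(x,φy)η(z) + g(x,φz)η(y)} for a real scalar θ*(ξ) on an almost contact B-metric vector space. Then the Nijenhuis-type tensor N(x,y,z) = F(φx,y,z) - F(x,y,φz) + F(x,φy,ξ)η(z) - F(φy,x,z) + F(y,x,φz) - F(y,φx,ξ)η(z) vanishes identically. -/
/-!
For F in the class F₅, the three terms of N coming from (x, y) combine, after expanding
φ² = -id + η ⊗ ξ, the B-metric identity and η ∘ φ = 0, to a multiple of
(g(x, y) - η(x)η(y))η(z). This is symmetric in x and y, so N, being its antisymmetrization,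
vanishes.
-/

section F5

variable {V : Type*} [AddCommGroup V] [Module ℝ V]
  {φ : V →ₗ[ℝ] V} {ξ : V} {η : V →ₗ[ℝ] ℝ} {g : V →ₗ[ℝ] V →ₗ[ℝ] ℝ}

theorem half_nijenhuis_eq_of_F5 (hφ2 : ∀ x : V, φ (φ x) = -x + η x • ξ)
    (hηφ : ∀ x : V, η (φ x) = 0) (hηξ : η ξ = 1)
    (hB : ∀ x y : V, g (φ x) (φ y) = - g x y + η x * η y)
    (c : ℝ) {F : V → V → V → ℝ}
    (hF : ∀ x y z : V, F x y z = c * (g x (φ y) * η z + g x (φ z) * η y)) (x y z : V) :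
    F (φ x) y z - F x y (φ z) + F x (φ y) ξ * η z = -2 * c * (g x y - η x * η y) * η z := by
  simp only [hF, hηφ, hφ2, hηξ, hB, map_add, map_smul, map_neg, smul_eq_mul]
  ring

end F5

theorem stmt10_general (V : Type*) [AddCommGroup V] [Module ℝ V]
    (φ : V →ₗ[ℝ] V) (ξ : V) (η : V →ₗ[ℝ] ℝ)
    (hφ2 : ∀ x : V, φ (φ x) = -x + η x • ξ)
    (hηφ : ∀ x : V, η (φ x) = 0) (hηξ : η ξ = 1)
    (g : V →ₗ[ℝ] V →ₗ[ℝ] ℝ) (hsym : ∀ x y : V, g x y = g y x)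
    (hB : ∀ x y : V, g (φ x) (φ y) = - g x y + η x * η y)
    (n : ℕ) (θsξ : ℝ)
    (F : V → V → V → ℝ)
    (hF : ∀ x y z : V, F x y z =
      -(θsξ / (2 * n)) * (g x (φ y) * η z + g x (φ z) * η y))
    (N : V → V → V → ℝ)
    (hN : ∀ x y z : V, N x y z = F (φ x) y z - F x y (φ z) + F x (φ y) ξ * η z
          - F (φ y) x z + F y x (φ z) - F y (φ x) ξ * η z) :
    ∀ x y z : V, N x y z = 0 := by
  intro x y z
  have hxy := half_nijenhuis_eq_of_F5 hφ2 hηφ hηξ hB _ hF x y z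
  have hyx := half_nijenhuis_eq_of_F5 hφ2 hηφ hηξ hB _ hF y x z
  rw [hsym y x, mul_comm (η y)] at hyx
  rw [hN]
  linarith

theorem stmt10 (V : Type*) [AddCommGroup V] [Module ℝ V]
    (φ : V →ₗ[ℝ] V) (ξ : V) (η : V →ₗ[ℝ] ℝ)
    (hφξ : φ ξ = 0) (hφ2 : ∀ x : V, φ (φ x) = -x + η x • ξ)
    (hηφ : ∀ x : V, η (φ x) = 0) (hηξ : η ξ = 1)
    (g : V →ₗ[ℝ] V →ₗ[ℝ] ℝ) (hsym : ∀ x y : V, g x y = g y x)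
    (hB : ∀ x y : V, g (φ x) (φ y) = - g x y + η x * η y)
    (n : ℕ) (θsξ : ℝ)
    (F : V → V → V → ℝ)
    (hF : ∀ x y z : V, F x y z =
      -(θsξ / (2 * n)) * (g x (φ y) * η z + g x (φ z) * η y))
    (N : V → V → V → ℝ)
    (hN : ∀ x y z : V, N x y z = F (φ x) y z - F x y (φ z) + F x (φ y) ξ * η z
          - F (φ y) x z + F y x (φ z) - F y (φ x) ξ * η z) :
    ∀ x y z : V, N x y z = 0 :=
  stmt10_general V φ ξ η hφ2 hηφ hηξ g hsym hB n θsξ F hF N hN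
end

section
/- Suppose F satisfies the class F₁₁ condition F(x,y,z) = η(x){η(y)ω(z) + η(z)ω(y)} for some 1-form ω with ω(ξ)=0. Then the Nijenhuis-type tensor N(x,y,z) = F(φx,y,z) - F(x,y,φz) + F(x,φy,ξ)η(z) - F(φy,x,z) + F(y,x,φz) - F(y,φx,ξ)η(z) equals {η(x)ω(φy) - η(y)ω(φx)}·η(z), and consequently N(φx, φy, z) = 0 for all x, y, z. -/
theorem stmt11_general (V : Type*) [AddCommGroup V] [Module ℝ V]
    (φ : V →ₗ[ℝ] V) (ξ : V) (η : V →ₗ[ℝ] ℝ)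
    (hηφ : ∀ x : V, η (φ x) = 0) (hηξ : η ξ = 1)
    (ω : V →ₗ[ℝ] ℝ) (hω : ω ξ = 0)
    (F : V → V → V → ℝ)
    (hF : ∀ x y z : V, F x y z = η x * (η y * ω z + η z * ω y))
    (N : V → V → V → ℝ)
    (hN : ∀ x y z : V, N x y z = F (φ x) y z - F x y (φ z) + F x (φ y) ξ * η z
          - F (φ y) x z + F y x (φ z) - F y (φ x) ξ * η z) :
    (∀ x y z : V, N x y z = (η x * ω (φ y) - η y * ω (φ x)) * η z) ∧
    (∀ x y z : V, N (φ x) (φ y) z = 0) := by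
  have hN_eq : ∀ x y z : V, N x y z = (η x * ω (φ y) - η y * ω (φ x)) * η z := by
    intro x y z
    -- The two `F (·) (·) (φ z)` terms cancel and the `F (φ ·) …` terms vanish; only the `ξ`-terms survive.
    simp only [hN, hF, hηφ, hηξ, hω]
    ring
  refine ⟨hN_eq, fun x y z => ?_⟩
  rw [hN_eq, hηφ, hηφ]
  ring

theorem stmt11 (V : Type*) [AddCommGroup V] [Module ℝ V]
    (φ : V →ₗ[ℝ] V) (ξ : V) (η : V →ₗ[ℝ] ℝ)
    (hφξ : φ ξ = 0) (hφ2 : ∀ x : V, φ (φ x) = -x + η x • ξ)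
    (hηφ : ∀ x : V, η (φ x) = 0) (hηξ : η ξ = 1)
    (g : V →ₗ[ℝ] V →ₗ[ℝ] ℝ) (hsym : ∀ x y : V, g x y = g y x)
    (hB : ∀ x y : V, g (φ x) (φ y) = - g x y + η x * η y)
    (ω : V →ₗ[ℝ] ℝ) (hω : ω ξ = 0)
    (F : V → V → V → ℝ)
    (hF : ∀ x y z : V, F x y z = η x * (η y * ω z + η z * ω y))
    (N : V → V → V → ℝ)
    (hN : ∀ x y z : V, N x y z = F (φ x) y z - F x y (φ z) + F x (φ y) ξ * η z
          - F (φ y) x z + F y x (φ z) - F y (φ x) ξ * η z) :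
    (∀ x y z : V, N x y z = (η x * ω (φ y) - η y * ω (φ x)) * η z) ∧
    (∀ x y z : V, N (φ x) (φ y) z = 0) :=
  stmt11_general V φ ξ η hηφ hηξ ω hω F hF N hN
end

section
/- Suppose F satisfies the class F₈/F₉-type condition F(x,y,z) = F(x,y,ξ)η(z) + F(x,z,ξ)η(y) with F(x,y,ξ) = F(φx,φy,ξ) and F(x,ξ,ξ)=0 for all x,y. Then the Nijenhuis-type tensor satisfies N(x,y,z) = 2{η(x)F(y,φz,ξ) - η(y)F(x,φz,ξ)}, and hence N(φx, φy, z) = 0 for all x,y,z. -/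
/-!
Under `F(x,y,z) = F(x,y,ξ)η(z) + F(x,z,ξ)η(y)` every term of `N` collapses to a term of the form
`F(·,·,ξ)η(·)`. The invariance `F(x,y,ξ) = F(φx,φy,ξ)` applied to `φx`, together with
`φ² = -1 + η ⊗ ξ` and `φξ = 0`, gives `F(φx,y,ξ) = -F(x,φy,ξ)`, after which the terms carrying
`η(z)` cancel in pairs. Since `η ∘ φ = 0`, the resulting formula vanishes at
`(φx, φy, z)`.
-/

namespace AlmostContactBMetric

variable {V : Type*} [AddCommGroup V] [Module ℝ V]
  (φ : V →ₗ[ℝ] V) (ξ : V) (η : V →ₗ[ℝ] ℝ) (F : V →ₗ[ℝ] V →ₗ[ℝ] V →ₗ[ℝ] ℝ)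

def nijenhuis (x y z : V) : ℝ :=
  F (φ x) y z - F x y (φ z) + F x (φ y) ξ * η z - F (φ y) x z + F y x (φ z) - F y (φ x) ξ * η z

variable {φ ξ η F}

theorem apply_xi_apply_xi_eq_zero (hφξ : φ ξ = 0)
    (hF : ∀ x y : V, F x y ξ = F (φ x) (φ y) ξ) (y : V) : F ξ y ξ = 0 := by
  rw [hF, hφξ, map_zero, LinearMap.zero_apply, LinearMap.zero_apply]

theorem apply_phi_apply_xi (hφξ : φ ξ = 0) (hφ2 : ∀ x : V, φ (φ x) = -x + η x • ξ)
    (hF : ∀ x y : V, F x y ξ = F (φ x) (φ y) ξ) (x y : V) :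
    F (φ x) y ξ = -F x (φ y) ξ := by
  rw [hF (φ x) y, hφ2]
  simp only [map_add, map_neg, map_smul, LinearMap.add_apply, LinearMap.neg_apply,
    LinearMap.smul_apply, apply_xi_apply_xi_eq_zero hφξ hF, smul_zero, add_zero]

theorem nijenhuis_eq (hφξ : φ ξ = 0) (hφ2 : ∀ x : V, φ (φ x) = -x + η x • ξ)
    (hηφ : ∀ x : V, η (φ x) = 0)
    (hF3 : ∀ x y z : V, F x y z = F x y ξ * η z + F x z ξ * η y)
    (hF4 : ∀ x y : V, F x y ξ = F (φ x) (φ y) ξ) (x y z : V) :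
    nijenhuis φ ξ η F x y z = 2 * (η x * F y (φ z) ξ - η y * F x (φ z) ξ) := by
  have hφF := apply_phi_apply_xi hφξ hφ2 hF4
  rw [nijenhuis, hF3 (φ x) y z, hF3 x y (φ z), hF3 (φ y) x z, hF3 y x (φ z),
    hφF x y, hφF x z, hφF y x, hφF y z, hηφ]
  ring

end AlmostContactBMetric

theorem stmt12_general (V : Type*) [AddCommGroup V] [Module ℝ V]
    (φ : V →ₗ[ℝ] V) (ξ : V) (η : V →ₗ[ℝ] ℝ)
    (hφξ : φ ξ = 0) (hφ2 : ∀ x : V, φ (φ x) = -x + η x • ξ)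
    (hηφ : ∀ x : V, η (φ x) = 0)
    (F : V →ₗ[ℝ] V →ₗ[ℝ] V →ₗ[ℝ] ℝ)
    (hF3 : ∀ x y z : V, F x y z = F x y ξ * η z + F x z ξ * η y)
    (hF4 : ∀ x y : V, F x y ξ = F (φ x) (φ y) ξ)
    (N : V → V → V → ℝ)
    (hN : ∀ x y z : V, N x y z = F (φ x) y z - F x y (φ z) + F x (φ y) ξ * η z
          - F (φ y) x z + F y x (φ z) - F y (φ x) ξ * η z) :
    (∀ x y z : V, N x y z = 2 * (η x * F y (φ z) ξ - η y * F x (φ z) ξ)) ∧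
    (∀ x y z : V, N (φ x) (φ y) z = 0) := by
  have hN_eq : ∀ x y z : V, N x y z = 2 * (η x * F y (φ z) ξ - η y * F x (φ z) ξ) :=
    fun x y z => (hN x y z).trans (AlmostContactBMetric.nijenhuis_eq hφξ hφ2 hηφ hF3 hF4 x y z)
  refine ⟨hN_eq, fun x y z => ?_⟩
  rw [hN_eq, hηφ, hηφ]
  ring

theorem stmt12 (V : Type*) [AddCommGroup V] [Module ℝ V]
    (φ : V →ₗ[ℝ] V) (ξ : V) (η : V →ₗ[ℝ] ℝ)
    (hφξ : φ ξ = 0) (hφ2 : ∀ x : V, φ (φ x) = -x + η x • ξ)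
    (hηφ : ∀ x : V, η (φ x) = 0) (hηξ : η ξ = 1)
    (g : V →ₗ[ℝ] V →ₗ[ℝ] ℝ) (hsym : ∀ x y : V, g x y = g y x)
    (hB : ∀ x y : V, g (φ x) (φ y) = - g x y + η x * η y)
    (F : V →ₗ[ℝ] V →ₗ[ℝ] V →ₗ[ℝ] ℝ)
    (hF1 : ∀ x y z : V, F x y z = F x z y)
    (hF2 : ∀ x y z : V, F x y z = F x (φ y) (φ z) + η y * F x ξ z + η z * F x y ξ)
    (hF3 : ∀ x y z : V, F x y z = F x y ξ * η z + F x z ξ * η y)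
    (hF4 : ∀ x y : V, F x y ξ = F (φ x) (φ y) ξ)
    (hF5 : ∀ x : V, F x ξ ξ = 0)
    (N : V → V → V → ℝ)
    (hN : ∀ x y z : V, N x y z = F (φ x) y z - F x y (φ z) + F x (φ y) ξ * η z
          - F (φ y) x z + F y x (φ z) - F y (φ x) ξ * η z) :
    (∀ x y z : V, N x y z = 2 * (η x * F y (φ z) ξ - η y * F x (φ z) ξ)) ∧
    (∀ x y z : V, N (φ x) (φ y) z = 0) :=
  stmt12_general V φ ξ η hφξ hφ2 hηφ F hF3 hF4 N hN
end

section
/- Define Q⁰(x,y,z) = ½{F(x,φy,z) + η(z)F(x,φy,ξ) - 2η(y)F(x,φz,ξ)} on an almost contact B-metric vector space, where F is a trilinear form satisfying F(x,y,z)=F(x,z,y) and F(x,y,z)=F(x,φy,φz)+η(y)F(x,ξ,z)+η(z)F(x,y,ξ). Then Q⁰ satisfies the natural-connection conditions: Q⁰(x,y,φz) - Q⁰(x,φy,z) = F(x,y,z) and Q⁰(x,y,z) = -Q⁰(x,z,y) for all x,y,z. -/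
section CommRing

variable {R V : Type*} [CommRing R] [AddCommGroup V] [Module R V]
  {φ : V →ₗ[R] V} {ξ : V} {η : V →ₗ[R] R} {F : V →ₗ[R] V →ₗ[R] V →ₗ[R] R}

theorem trilinear_xi_xi_eq_zero (hφξ : φ ξ = 0) (hηξ : η ξ = 1)
    (hF : ∀ x y z : V, F x y z = F x (φ y) (φ z) + η y * F x ξ z + η z * F x y ξ) (x : V) :
    F x ξ ξ = 0 := by
  have h := hF x ξ ξ
  simp only [hφξ, hηξ, map_zero, one_mul, zero_add] at h
  linear_combination -h

theorem trilinear_phi_left_eq (hφ2 : ∀ x : V, φ (φ x) = -x + η x • ξ)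
    (hηφ : ∀ x : V, η (φ x) = 0)
    (hF : ∀ x y z : V, F x y z = F x (φ y) (φ z) + η y * F x ξ z + η z * F x y ξ) (x y z : V) :
    F x (φ y) z = -F x y (φ z) + η y * F x ξ (φ z) + η z * F x (φ y) ξ := by
  simpa only [hφ2, hηφ, map_add, map_neg, map_smul, LinearMap.add_apply, LinearMap.neg_apply,
    LinearMap.smul_apply, smul_eq_mul, zero_mul, add_zero] using hF x (φ y) z

end CommRing

section Field

variable {K V : Type*} [Field K] [CharZero K] [AddCommGroup V] [Module K V]
  {φ : V →ₗ[K] V} {ξ : V} {η : V →ₗ[K] K} {F : V →ₗ[K] V →ₗ[K] V →ₗ[K] K}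

/-- The potential `Q⁰` of the φB-connection. -/
def phiBPotential (φ : V →ₗ[K] V) (ξ : V) (η : V →ₗ[K] K) (F : V →ₗ[K] V →ₗ[K] V →ₗ[K] K)
    (x y z : V) : K :=
  (1 / 2) * (F x (φ y) z + η z * F x (φ y) ξ - 2 * η y * F x (φ z) ξ)

theorem phiBPotential_phi_sub_phi (hφξ : φ ξ = 0) (hφ2 : ∀ x : V, φ (φ x) = -x + η x • ξ)
    (hηφ : ∀ x : V, η (φ x) = 0) (hηξ : η ξ = 1)
    (hF1 : ∀ x y z : V, F x y z = F x z y)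
    (hF2 : ∀ x y z : V, F x y z = F x (φ y) (φ z) + η y * F x ξ z + η z * F x y ξ)
    (x y z : V) :
    phiBPotential φ ξ η F x y (φ z) - phiBPotential φ ξ η F x (φ y) z = F x y z := by
  simp only [phiBPotential, hφ2, hηφ, map_add, map_neg, map_smul, smul_eq_mul,
    LinearMap.add_apply, LinearMap.neg_apply, LinearMap.smul_apply]
  linear_combination (-1 / 2) * hF2 x y z + η y * hF1 x z ξ
    + (-3 / 2) * η y * η z * trilinear_xi_xi_eq_zero hφξ hηξ hF2 x

theorem phiBPotential_antisymm (hφ2 : ∀ x : V, φ (φ x) = -x + η x • ξ)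
    (hηφ : ∀ x : V, η (φ x) = 0)
    (hF1 : ∀ x y z : V, F x y z = F x z y)
    (hF2 : ∀ x y z : V, F x y z = F x (φ y) (φ z) + η y * F x ξ z + η z * F x y ξ)
    (x y z : V) :
    phiBPotential φ ξ η F x y z = -phiBPotential φ ξ η F x z y := by
  unfold phiBPotential
  linear_combination (1 / 2) * trilinear_phi_left_eq hφ2 hηφ hF2 x y z
    - (1 / 2) * hF1 x y (φ z) + (1 / 2) * η y * hF1 x ξ (φ z)

end Field

theorem stmt14_general (V : Type*) [AddCommGroup V] [Module ℝ V]
    (φ : V →ₗ[ℝ] V) (ξ : V) (η : V →ₗ[ℝ] ℝ)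
    (hφξ : φ ξ = 0) (hφ2 : ∀ x : V, φ (φ x) = -x + η x • ξ)
    (hηφ : ∀ x : V, η (φ x) = 0) (hηξ : η ξ = 1)
    (F : V →ₗ[ℝ] V →ₗ[ℝ] V →ₗ[ℝ] ℝ)
    (hF1 : ∀ x y z : V, F x y z = F x z y)
    (hF2 : ∀ x y z : V, F x y z = F x (φ y) (φ z) + η y * F x ξ z + η z * F x y ξ)
    (Q0 : V → V → V → ℝ)
    (hQ0 : ∀ x y z : V, Q0 x y z =
      (1 / 2) * (F x (φ y) z + η z * F x (φ y) ξ - 2 * η y * F x (φ z) ξ)) :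
    (∀ x y z : V, Q0 x y (φ z) - Q0 x (φ y) z = F x y z) ∧
    (∀ x y z : V, Q0 x y z = - Q0 x z y) := by
  obtain rfl : Q0 = phiBPotential φ ξ η F := funext fun x => funext fun y => funext (hQ0 x y)
  exact ⟨phiBPotential_phi_sub_phi hφξ hφ2 hηφ hηξ hF1 hF2,
    phiBPotential_antisymm hφ2 hηφ hF1 hF2⟩

theorem stmt14 (V : Type*) [AddCommGroup V] [Module ℝ V]
    (φ : V →ₗ[ℝ] V) (ξ : V) (η : V →ₗ[ℝ] ℝ)
    (hφξ : φ ξ = 0) (hφ2 : ∀ x : V, φ (φ x) = -x + η x • ξ)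
    (hηφ : ∀ x : V, η (φ x) = 0) (hηξ : η ξ = 1)
    (g : V →ₗ[ℝ] V →ₗ[ℝ] ℝ) (hsym : ∀ x y : V, g x y = g y x)
    (hB : ∀ x y : V, g (φ x) (φ y) = - g x y + η x * η y)
    (F : V →ₗ[ℝ] V →ₗ[ℝ] V →ₗ[ℝ] ℝ)
    (hF1 : ∀ x y z : V, F x y z = F x z y)
    (hF2 : ∀ x y z : V, F x y z = F x (φ y) (φ z) + η y * F x ξ z + η z * F x y ξ)
    (Q0 : V → V → V → ℝ)
    (hQ0 : ∀ x y z : V, Q0 x y z =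
      (1 / 2) * (F x (φ y) z + η z * F x (φ y) ξ - 2 * η y * F x (φ z) ξ)) :
    (∀ x y z : V, Q0 x y (φ z) - Q0 x (φ y) z = F x y z) ∧
    (∀ x y z : V, Q0 x y z = - Q0 x z y) :=
  stmt14_general V φ ξ η hφξ hφ2 hηφ hηξ F hF1 hF2 Q0 hQ0
end

section
/- If N(φ·, φ·, ·) ≡ 0 (i.e., N(φx, φy, z) = 0 for all x,y,z), then the φ-canonical potential Q'(x,y,z) = Q⁰(x,y,z) - (1/8){N(φ²z,φ²y,φ²x) + 2N(φz,φy,ξ)η(x)} equals Q⁰(x,y,z); conversely, if Q' = Q⁰ then N(φx, φy, z) = 0 for all x,y,z. -/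
/-!
Setting `x = ξ` in `Q' = Q⁰` kills the first correction term (`φ² ξ = 0`) and leaves
`N(φz, φy, ξ) = 0`; the remaining term then says `N(φ²z, φ²y, φ²x) = 0`. Since `φ³ = -φ`, the
first two slots `φ²z, φ²y` run through all of `φ V`, and since `φ²c = -c + η(c) ξ` and `N` is
linear in its last slot, `N(φa, φb, c) = -N(φa, φb, φ²c) + η(c) N(φa, φb, ξ) = 0`.
-/

section

variable {V : Type*} [AddCommGroup V] [Module ℝ V] {φ : V →ₗ[ℝ] V} {ξ : V} {η : V →ₗ[ℝ] ℝ}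

theorem phi_phi_neg_phi (hφξ : φ ξ = 0) (hφ2 : ∀ x : V, φ (φ x) = -x + η x • ξ) (x : V) :
    φ (φ (-φ x)) = φ x := by
  rw [map_neg, map_neg, hφ2 x, map_add, map_neg, map_smul, hφξ, smul_zero, add_zero, neg_neg]

theorem apply_phi_phi_eq_zero_of_correction_eq_zero {L : V → V → V →ₗ[ℝ] ℝ}
    (hφξ : φ ξ = 0) (hφ2 : ∀ x : V, φ (φ x) = -x + η x • ξ) (hηξ : η ξ = 1)
    (hL : ∀ x y z : V, L (φ (φ z)) (φ (φ y)) (φ (φ x)) + 2 * L (φ z) (φ y) ξ * η x = 0)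
    (a b c : V) : L (φ a) (φ b) c = 0 := by
  have hξ : ∀ a b, L (φ a) (φ b) ξ = 0 := fun a b => by
    simpa [hφξ, hηξ] using hL ξ b a
  have h := hL c (-φ b) (-φ a)
  rw [phi_phi_neg_phi hφξ hφ2, phi_phi_neg_phi hφξ hφ2, hφ2 c, map_add, map_neg, map_smul,
    hξ, hξ] at h
  simpa using h

def nijenhuisForm (F : V →ₗ[ℝ] V →ₗ[ℝ] V →ₗ[ℝ] ℝ) (φ : V →ₗ[ℝ] V) (ξ : V) (η : V →ₗ[ℝ] ℝ)
    (x y : V) : V →ₗ[ℝ] ℝ :=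
  F (φ x) y - (F x y).comp φ + F x (φ y) ξ • η - F (φ y) x + (F y x).comp φ - F y (φ x) ξ • η

end

theorem stmt16_general (V : Type*) [AddCommGroup V] [Module ℝ V]
    (φ : V →ₗ[ℝ] V) (ξ : V) (η : V →ₗ[ℝ] ℝ)
    (hφξ : φ ξ = 0) (hφ2 : ∀ x : V, φ (φ x) = -x + η x • ξ)
    (hηξ : η ξ = 1)
    (F : V →ₗ[ℝ] V →ₗ[ℝ] V →ₗ[ℝ] ℝ)
    (Q0 : V → V → V → ℝ)
    (N : V → V → V → ℝ)
    (hN : ∀ x y z : V, N x y z = F (φ x) y z - F x y (φ z) + F x (φ y) ξ * η z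
          - F (φ y) x z + F y x (φ z) - F y (φ x) ξ * η z)
    (Q' : V → V → V → ℝ)
    (hQ' : ∀ x y z : V, Q' x y z = Q0 x y z
      - (1 / 8) * (N (φ (φ z)) (φ (φ y)) (φ (φ x)) + 2 * N (φ z) (φ y) ξ * η x)) :
    (∀ x y z : V, N (φ x) (φ y) z = 0) ↔ (∀ x y z : V, Q' x y z = Q0 x y z) := by
  have hN_eq : ∀ x y z, N x y z = nijenhuisForm F φ ξ η x y z := fun x y z => by
    simp [hN, nijenhuisForm, mul_comm]
  simp only [hN_eq] at hQ' ⊢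
  constructor
  · intro h x y z
    rw [hQ', h, h]
    ring
  · intro h
    exact apply_phi_phi_eq_zero_of_correction_eq_zero hφξ hφ2 hηξ fun x y z => by
      linarith [hQ' x y z, h x y z]

theorem stmt16 (V : Type*) [AddCommGroup V] [Module ℝ V]
    (φ : V →ₗ[ℝ] V) (ξ : V) (η : V →ₗ[ℝ] ℝ)
    (hφξ : φ ξ = 0) (hφ2 : ∀ x : V, φ (φ x) = -x + η x • ξ)
    (hηφ : ∀ x : V, η (φ x) = 0) (hηξ : η ξ = 1)
    (g : V →ₗ[ℝ] V →ₗ[ℝ] ℝ) (hsym : ∀ x y : V, g x y = g y x)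
    (hB : ∀ x y : V, g (φ x) (φ y) = - g x y + η x * η y)
    (F : V →ₗ[ℝ] V →ₗ[ℝ] V →ₗ[ℝ] ℝ)
    (hF1 : ∀ x y z : V, F x y z = F x z y)
    (hF2 : ∀ x y z : V, F x y z = F x (φ y) (φ z) + η y * F x ξ z + η z * F x y ξ)
    (Q0 : V → V → V → ℝ)
    (hQ0 : ∀ x y z : V, Q0 x y z =
      (1 / 2) * (F x (φ y) z + η z * F x (φ y) ξ - 2 * η y * F x (φ z) ξ))
    (N : V → V → V → ℝ)
    (hN : ∀ x y z : V, N x y z = F (φ x) y z - F x y (φ z) + F x (φ y) ξ * η z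
          - F (φ y) x z + F y x (φ z) - F y (φ x) ξ * η z)
    (Q' : V → V → V → ℝ)
    (hQ' : ∀ x y z : V, Q' x y z = Q0 x y z
      - (1 / 8) * (N (φ (φ z)) (φ (φ y)) (φ (φ x)) + 2 * N (φ z) (φ y) ξ * η x)) :
    (∀ x y z : V, N (φ x) (φ y) z = 0) ↔ (∀ x y z : V, Q' x y z = Q0 x y z) :=
  stmt16_general V φ ξ η hφξ hφ2 hηξ F Q0 N hN Q' hQ'
end
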